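/- arXiv:2004.11796 — 2 statements merged into one kernel-verified Lean document; each statement's English description precedes it below -/
import Mathlib

section
/- Let Ψ be a Max-2OR instance with m_1 1-clauses and m_2 2-clauses. Then val_Ψ ≤ min{ m_1 + m_2, (m_1 + 2m_2 + bias(Ψ))/2 }. (Lemma 3.9.) -/
/-- A `Max-2OR` clause: either a 1-clause (a single literal) or a 2-clause
(disjunction of two literals on distinct variables). A literal on variable `i`
with polarity `b` (`b = true` for `xᵢ`, `b = false` for `¬xᵢ`) evaluates to `σ i == b`. -/
inductive OrClause (n : ℕ) where
  | one (i : Fin n) (b : Bool)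
  | two (i : Fin n) (bi : Bool) (j : Fin n) (bj : Bool) (hij : i ≠ j)

/-- Evaluation of a clause under an assignment. -/
def OrClause.eval {n : ℕ} (σ : Fin n → Bool) : OrClause n → Bool
  | .one i b => σ i == b
  | .two i bi j bj _ => (σ i == bi) || (σ j == bj)

/-- Whether a clause is a 1-clause. -/
def OrClause.isOne {n : ℕ} : OrClause n → Bool
  | .one _ _ => true
  | .two _ _ _ _ _ => false

/-- `m₁`: the number of 1-clauses. -/
def numOne {n : ℕ} (Ψ : List (OrClause n)) : ℕ := Ψ.countP OrClause.isOne

/-- `m₂`: the number of 2-clauses. -/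
def numTwo {n : ℕ} (Ψ : List (OrClause n)) : ℕ := Ψ.countP (fun C => !C.isOne)

/-- The number of clauses of `Ψ` satisfied by `σ`, i.e. `val_Ψ(σ)`. -/
def satCount {n : ℕ} (Ψ : List (OrClause n)) (σ : Fin n → Bool) : ℕ :=
  Ψ.countP (fun C => C.eval σ)

/-- `val_Ψ`: the maximum number of simultaneously satisfiable clauses. -/
def maxVal {n : ℕ} (Ψ : List (OrClause n)) : ℕ :=
  Finset.univ.sup (fun σ : Fin n → Bool => satCount Ψ σ)

/-- `pos_i^{(1)}(Ψ)`: the number of 1-clauses containing the literal `xᵢ`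
(`negᵢ^{(1)}` for `¬xᵢ`, according to polarity `b`). -/
def cnt1 {n : ℕ} (Ψ : List (OrClause n)) (v : Fin n) (b : Bool) : ℕ :=
  (Ψ.map (fun C => match C with
    | .one i b' => if i = v ∧ b' = b then 1 else 0
    | .two _ _ _ _ _ => 0)).sum

/-- `pos_i^{(2)}(Ψ)`: the number of 2-clauses containing the literal `xᵢ`
(`negᵢ^{(2)}` for `¬xᵢ`, according to polarity `b`). -/
def cnt2 {n : ℕ} (Ψ : List (OrClause n)) (v : Fin n) (b : Bool) : ℕ :=
  (Ψ.map (fun C => match C with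
    | .one _ _ => 0
    | .two i bi j bj _ => (if i = v ∧ bi = b then 1 else 0)
                        + (if j = v ∧ bj = b then 1 else 0))).sum

/-- `bias(Ψ) = (1/2) Σᵢ |2 posᵢ⁽¹⁾ + posᵢ⁽²⁾ − 2 negᵢ⁽¹⁾ − negᵢ⁽²⁾|`. -/
noncomputable def bias {n : ℕ} (Ψ : List (OrClause n)) : ℝ :=
  (1/2) * ∑ v : Fin n,
    |2 * (cnt1 Ψ v true : ℝ) + (cnt2 Ψ v true : ℝ)
      - 2 * (cnt1 Ψ v false : ℝ) - (cnt2 Ψ v false : ℝ)|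

/-! Weigh each literal occurrence 1 in a 2-clause and 2 in a 1-clause, and let `wᵢ(b)` be the total
weight of the literal on `xᵢ` with polarity `b`. A clause satisfied by `σ` has a true literal, so
`2 val_Ψ(σ) ≤ m₂ + Σᵢ wᵢ(σ xᵢ)`, the `m₂` paying for 2-clauses with only one true literal. Bounding
`wᵢ(σ xᵢ) ≤ max (wᵢ 1) (wᵢ 0) = (wᵢ 1 + wᵢ 0)/2 + |wᵢ 1 - wᵢ 0|/2` and using that the total weight is
`2(m₁ + m₂)` gives `2 val_Ψ(σ) ≤ m₁ + 2m₂ + bias(Ψ)`. -/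

theorem Bool.apply_le_half_add_add_half_abs_sub {α : Type*} [Field α] [LinearOrder α]
    [IsStrictOrderedRing α] (f : Bool → α) (b : Bool) :
    f b ≤ (f true + f false) / 2 + |f true - f false| / 2 := by
  cases b
  · linarith [neg_abs_le (f true - f false)]
  · linarith [le_abs_self (f true - f false)]

namespace OrClause

variable {n : ℕ}

def weight : OrClause n → Fin n → Bool → ℕ
  | .one i b', v, b => if i = v ∧ b' = b then 2 else 0
  | .two i bi j bj _, v, b =>
      (if i = v ∧ bi = b then 1 else 0) + (if j = v ∧ bj = b then 1 else 0)

theorem two_mul_ite_eval_le (C : OrClause n) (σ : Fin n → Bool) :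
    2 * (if C.eval σ then 1 else 0) ≤ (if !C.isOne then 1 else 0) + ∑ v, C.weight v (σ v) := by
  cases C with
  | one i b =>
    simp only [eval, isOne, weight, ite_and, Finset.sum_ite_eq, Finset.mem_univ, if_true]
    obtain h | h := Bool.eq_false_or_eq_true (σ i) <;> cases b <;> simp [h]
  | two i bi j bj _ =>
    simp only [eval, isOne, weight, ite_and, Finset.sum_add_distrib, Finset.sum_ite_eq,
      Finset.mem_univ, if_true]
    obtain hi | hi := Bool.eq_false_or_eq_true (σ i) <;>
      obtain hj | hj := Bool.eq_false_or_eq_true (σ j) <;> cases bi <;> cases bj <;> simp [hi, hj]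

theorem sum_weight_true_add_false (C : OrClause n) :
    ∑ v, (C.weight v true + C.weight v false) = 2 := by
  cases C with
  | one i b => cases b <;> simp [weight]
  | two i bi j bj _ => cases bi <;> cases bj <;> simp [weight, Finset.sum_add_distrib]

end OrClause

section

variable {n : ℕ}

def litWeight (Ψ : List (OrClause n)) (v : Fin n) (b : Bool) : ℕ :=
  2 * cnt1 Ψ v b + cnt2 Ψ v b

@[simp]
theorem litWeight_nil (v : Fin n) (b : Bool) : litWeight [] v b = 0 := rfl

@[simp]
theorem litWeight_cons (C : OrClause n) (Ψ : List (OrClause n)) (v : Fin n) (b : Bool) :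
    litWeight (C :: Ψ) v b = C.weight v b + litWeight Ψ v b := by
  cases C <;> simp only [litWeight, cnt1, cnt2, OrClause.weight, List.map_cons, List.sum_cons] <;>
    split_ifs <;> omega

theorem two_mul_satCount_le (Ψ : List (OrClause n)) (σ : Fin n → Bool) :
    2 * satCount Ψ σ ≤ numTwo Ψ + ∑ v, litWeight Ψ v (σ v) := by
  induction Ψ with
  | nil => simp [satCount, numTwo]
  | cons C Ψ ih =>
    have hC := C.two_mul_ite_eval_le σ
    simp only [satCount, numTwo, List.countP_cons, litWeight_cons,
      Finset.sum_add_distrib] at ih ⊢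
    split_ifs at hC ⊢ <;> omega

theorem sum_litWeight_true_add_false (Ψ : List (OrClause n)) :
    ∑ v, (litWeight Ψ v true + litWeight Ψ v false) = 2 * Ψ.length := by
  induction Ψ with
  | nil => simp
  | cons C Ψ ih =>
    have hC := C.sum_weight_true_add_false
    calc ∑ v, (litWeight (C :: Ψ) v true + litWeight (C :: Ψ) v false)
        = ∑ v, (C.weight v true + C.weight v false)
          + ∑ v, (litWeight Ψ v true + litWeight Ψ v false) := by
          rw [← Finset.sum_add_distrib]
          exact Finset.sum_congr rfl fun v _ => by simp only [litWeight_cons]; ring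
      _ = 2 * (C :: Ψ).length := by rw [hC, ih, List.length_cons]; ring

theorem numOne_add_numTwo (Ψ : List (OrClause n)) : numOne Ψ + numTwo Ψ = Ψ.length := by
  simp [numOne, numTwo, List.length_eq_countP_add_countP OrClause.isOne]

theorem bias_eq (Ψ : List (OrClause n)) :
    bias Ψ = ∑ v, |(litWeight Ψ v true : ℝ) - litWeight Ψ v false| / 2 := by
  simp only [bias, litWeight, Finset.mul_sum]
  push_cast
  congr! 1 with v
  ring_nf

theorem satCount_le_bias_bound (Ψ : List (OrClause n)) (σ : Fin n → Bool) :
    (satCount Ψ σ : ℝ) ≤ ((numOne Ψ : ℝ) + 2 * (numTwo Ψ : ℝ) + bias Ψ) / 2 := by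
  have hsat : (2 * satCount Ψ σ : ℝ) ≤ numTwo Ψ + ∑ v, (litWeight Ψ v (σ v) : ℝ) := by
    exact_mod_cast two_mul_satCount_le Ψ σ
  have htotal : ∑ v, ((litWeight Ψ v true : ℝ) + litWeight Ψ v false)
      = 2 * ((numOne Ψ : ℝ) + numTwo Ψ) := by
    exact_mod_cast (sum_litWeight_true_add_false Ψ).trans (by rw [numOne_add_numTwo])
  have hweight : ∑ v, (litWeight Ψ v (σ v) : ℝ) ≤ numOne Ψ + numTwo Ψ + bias Ψ :=
    calc ∑ v, (litWeight Ψ v (σ v) : ℝ)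
        ≤ ∑ v, (((litWeight Ψ v true : ℝ) + litWeight Ψ v false) / 2
          + |(litWeight Ψ v true : ℝ) - litWeight Ψ v false| / 2) :=
          Finset.sum_le_sum fun v _ =>
            Bool.apply_le_half_add_add_half_abs_sub (fun b => (litWeight Ψ v b : ℝ)) (σ v)
      _ = numOne Ψ + numTwo Ψ + bias Ψ := by
          rw [Finset.sum_add_distrib, ← Finset.sum_div, htotal, bias_eq]; ring
  linarith

end

/-- Lemma 3.9: `val_Ψ ≤ min{ m₁ + m₂, (m₁ + 2m₂ + bias(Ψ))/2 }`. -/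
theorem or_upper_bound {n : ℕ} (Ψ : List (OrClause n)) :
    (maxVal Ψ : ℝ) ≤
      min ((numOne Ψ : ℝ) + (numTwo Ψ : ℝ))
        (((numOne Ψ : ℝ) + 2 * (numTwo Ψ : ℝ) + bias Ψ) / 2) := by
  obtain ⟨σ, -, hσ⟩ := Finset.exists_mem_eq_sup Finset.univ Finset.univ_nonempty (satCount Ψ)
  rw [maxVal, hσ]
  refine le_min ?_ (satCount_le_bias_bound Ψ σ)
  exact_mod_cast (numOne_add_numTwo Ψ).symm ▸ List.countP_le_length
end

section
/- Let Ψ be a Max-2OR instance with m_1 1-clauses and m_2 > 0 2-clauses, and suppose bias(Ψ) ≤ m_2. Then val_Ψ ≥ m_1/2 + 3m_2/4 + bias(Ψ)²/(4m_2). (Lemma 3.10, part 2.) -/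
theorem List.sum_map_finset_sum {β ι M : Type*} [AddCommMonoid M] (l : List β) (s : Finset ι)
    (f : β → ι → M) :
    (l.map fun b => ∑ i ∈ s, f b i).sum = ∑ i ∈ s, (l.map (f · i)).sum := by
  induction l with
  | nil => simp
  | cons b l ih => simp [ih, Finset.sum_add_distrib]

theorem List.countP_eq_sum_map_ite {β R : Type*} [Semiring R] (l : List β) (p : β → Bool) :
    (l.countP p : R) = (l.map fun b => if p b then (1 : R) else 0).sum := by
  induction l with
  | nil => simp
  | cons b l ih => by_cases h : p b <;> simp [h, ih, add_comm]

theorem Finset.sum_mul_le_of_le {β R : Type*} [Semiring R] [PartialOrder R] [IsOrderedRing R]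
    {s : Finset β} {w f : β → R} {M : R}
    (hw : ∀ x ∈ s, 0 ≤ w x) (hw1 : ∑ x ∈ s, w x = 1) (hf : ∀ x ∈ s, f x ≤ M) :
    ∑ x ∈ s, w x * f x ≤ M :=
  calc ∑ x ∈ s, w x * f x ≤ ∑ x ∈ s, w x * M :=
        Finset.sum_le_sum fun x hx => mul_le_mul_of_nonneg_left (hf x hx) (hw x hx)
    _ = M := by rw [← Finset.sum_mul, hw1, one_mul]

theorem Fintype.sum_prod_mul_prod_eq_prod_sum {ι α R : Type*} [Fintype ι] [DecidableEq ι]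
    [Fintype α] [CommSemiring R] (q f : ι → α → R) (hq : ∀ i, ∑ a, q i a = 1) (S : Finset ι) :
    ∑ σ : ι → α, (∏ i, q i (σ i)) * ∏ i ∈ S, f i (σ i) = ∏ i ∈ S, ∑ a, q i a * f i a := by
  have h_ite (g : ι → R) : ∏ i ∈ S, g i = ∏ i, if i ∈ S then g i else 1 := by
    rw [Finset.prod_ite_mem, Finset.univ_inter]
  simp_rw [h_ite, ← Finset.prod_mul_distrib]
  rw [← Fintype.prod_sum fun i a => q i a * if i ∈ S then f i a else 1]
  refine Finset.prod_congr rfl fun i _ => ?_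
  split_ifs
  · rfl
  · simp [hq]

noncomputable section

variable {n : ℕ}

def litSign (b : Bool) : ℝ := if b then 1 else -1

theorem abs_litSign (b : Bool) : |litSign b| = 1 := by cases b <;> simp [litSign]

theorem litSign_not (b : Bool) : litSign (!b) = -litSign b := by cases b <;> simp [litSign]

/-- The probability that the literal `x_v` (for `b = true`) or `¬x_v` (for `b = false`) holds
when every variable `x_v` is set independently to `1` with probability `1/2 + t v`. -/
def literalProb (t : Fin n → ℝ) (v : Fin n) (b : Bool) : ℝ := 1 / 2 + litSign b * t v

theorem literalProb_nonneg {t : Fin n → ℝ} {v : Fin n} (ht : |t v| ≤ 1 / 2) (b : Bool) :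
    0 ≤ literalProb t v b := by
  have := neg_abs_le (litSign b * t v)
  rw [abs_mul, abs_litSign, one_mul] at this
  unfold literalProb
  linarith

theorem sum_literalProb (t : Fin n → ℝ) (v : Fin n) : ∑ b, literalProb t v b = 1 := by
  simp only [Fintype.sum_bool, literalProb, litSign, if_true, Bool.false_eq_true, if_false]
  ring

def assignWeight (t : Fin n → ℝ) (σ : Fin n → Bool) : ℝ := ∏ v, literalProb t v (σ v)

def OrClause.satProb (t : Fin n → ℝ) : OrClause n → ℝ
  | .one i b => literalProb t i b
  | .two i bi j bj _ => 1 - literalProb t i (!bi) * literalProb t j (!bj)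

theorem OrClause.sum_assignWeight_mul_eval (t : Fin n → ℝ) (C : OrClause n) :
    ∑ σ, assignWeight t σ * (if C.eval σ then 1 else 0) = C.satProb t := by
  have marginal (S : Finset (Fin n)) (f : Fin n → Bool → ℝ) :=
    Fintype.sum_prod_mul_prod_eq_prod_sum (literalProb t) f (sum_literalProb t) S
  cases C with
  | one i b =>
    simpa [assignWeight, eval, satProb, ite_and] using
      marginal {i} fun _ a => if a = b then 1 else 0
  | two i bi j bj hij =>
    let f : Fin n → Bool → ℝ := fun v a => if v = i then (if a = !bi then 1 else 0)
      else if a = !bj then 1 else 0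
    have h_ind (σ : Fin n → Bool) :
        (if (two i bi j bj hij).eval σ then 1 else 0) = 1 - ∏ v ∈ {i, j}, f v (σ v) := by
      rw [Finset.prod_pair hij]
      simp only [f, eval, if_pos rfl, if_neg (Ne.symm hij)]
      by_cases hi : σ i = !bi <;> by_cases hj : σ j = !bj <;> simp_all
    have h_total := marginal ∅ f
    have h_pair := marginal {i, j} f
    simp only [Finset.prod_empty, mul_one] at h_total
    rw [Finset.prod_pair hij] at h_pair
    simp only [h_ind, mul_sub, mul_one, Finset.sum_sub_distrib, assignWeight, h_total, h_pair]
    simp [f, satProb, Ne.symm hij]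

theorem sum_assignWeight_mul_satCount (t : Fin n → ℝ) (Ψ : List (OrClause n)) :
    ∑ σ, assignWeight t σ * satCount Ψ σ = (Ψ.map (·.satProb t)).sum := by
  simp_rw [satCount, List.countP_eq_sum_map_ite, ← List.sum_map_mul_left,
    ← List.sum_map_finset_sum, OrClause.sum_assignWeight_mul_eval]

theorem sum_satProb_le_maxVal {t : Fin n → ℝ} (ht : ∀ v, |t v| ≤ 1 / 2) (Ψ : List (OrClause n)) :
    (Ψ.map (·.satProb t)).sum ≤ maxVal Ψ := by
  rw [← sum_assignWeight_mul_satCount]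
  refine Finset.sum_mul_le_of_le (fun σ _ => ?_) ?_ (fun σ _ => ?_)
  · exact Finset.prod_nonneg fun v _ => literalProb_nonneg (ht v) (σ v)
  · simpa [assignWeight] using
      Fintype.sum_prod_mul_prod_eq_prod_sum (literalProb t) 1 (sum_literalProb t) ∅
  · exact_mod_cast Finset.le_sup (f := satCount Ψ) (Finset.mem_univ σ)

def OrClause.imbalance : OrClause n → Fin n → ℝ
  | .one i b, v => if i = v then 2 * litSign b else 0
  | .two i bi j bj _, v => (if i = v then litSign bi else 0) + (if j = v then litSign bj else 0)

def imbalance (Ψ : List (OrClause n)) (v : Fin n) : ℝ :=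
  2 * (cnt1 Ψ v true : ℝ) + (cnt2 Ψ v true : ℝ) - 2 * (cnt1 Ψ v false : ℝ) - (cnt2 Ψ v false : ℝ)

theorem bias_eq_sum_abs_imbalance (Ψ : List (OrClause n)) :
    bias Ψ = 1 / 2 * ∑ v, |imbalance Ψ v| := rfl

theorem sum_map_imbalance (Ψ : List (OrClause n)) (v : Fin n) :
    (Ψ.map (·.imbalance v)).sum = imbalance Ψ v := by
  induction Ψ with
  | nil => simp [imbalance, cnt1, cnt2]
  | cons C Ψ ih =>
    rw [List.map_cons, List.sum_cons, ih]
    simp only [imbalance, cnt1, cnt2, List.map_cons, List.sum_cons, Nat.cast_add]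
    cases C with
    | one i b =>
      by_cases h : i = v <;> cases b <;> simp [h, OrClause.imbalance, litSign] <;> ring
    | two i bi j bj _ =>
      by_cases hi : i = v <;> by_cases hj : j = v <;> cases bi <;> cases bj <;>
        simp [hi, hj, OrClause.imbalance, litSign] <;> ring

theorem sum_map_ite_isOne (Ψ : List (OrClause n)) (a b : ℝ) :
    (Ψ.map fun C => if C.isOne then a else b).sum = a * numOne Ψ + b * numTwo Ψ := by
  induction Ψ with
  | nil => simp [numOne, numTwo]
  | cons C Ψ ih =>
    cases C <;> simp [numOne, numTwo, List.countP_cons, OrClause.isOne] at ih ⊢ <;> rw [ih] <;> ring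

theorem OrClause.le_satProb {t : Fin n → ℝ} {ε : ℝ} (ht : ∀ v, |t v| ≤ ε) (C : OrClause n) :
    (if C.isOne then 1 / 2 else 3 / 4 - ε ^ 2) + 1 / 2 * ∑ v, t v * C.imbalance v ≤ C.satProb t := by
  cases C with
  | one i b =>
    simp only [isOne, if_true, imbalance, mul_ite, mul_zero, Finset.sum_ite_eq, Finset.mem_univ,
      satProb, literalProb]
    exact le_of_eq (by ring)
  | two i bi j bj hij =>
    have h_prod : litSign bi * t i * (litSign bj * t j) ≤ ε ^ 2 := by
      refine (le_abs_self _).trans ?_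
      rw [abs_mul, abs_mul, abs_mul, abs_litSign, abs_litSign, one_mul, one_mul, sq]
      exact mul_le_mul (ht i) (ht j) (abs_nonneg _) ((abs_nonneg _).trans (ht i))
    simp only [isOne, Bool.false_eq_true, if_false, imbalance, mul_add, mul_ite, mul_zero,
      Finset.sum_add_distrib, Finset.sum_ite_eq, Finset.mem_univ, if_true, satProb, literalProb,
      litSign_not]
    nlinarith [h_prod]

theorem le_sum_satProb {t : Fin n → ℝ} {ε : ℝ} (ht : ∀ v, |t v| ≤ ε) (Ψ : List (OrClause n)) :
    numOne Ψ / 2 + (3 / 4 - ε ^ 2) * numTwo Ψ + 1 / 2 * ∑ v, t v * imbalance Ψ v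
      ≤ (Ψ.map (·.satProb t)).sum :=
  calc _ = (Ψ.map fun C => (if C.isOne then 1 / 2 else 3 / 4 - ε ^ 2)
          + 1 / 2 * ∑ v, t v * C.imbalance v).sum := by
        rw [List.sum_map_add, sum_map_ite_isOne, List.sum_map_mul_left,
          List.sum_map_finset_sum]
        simp_rw [List.sum_map_mul_left, sum_map_imbalance]
        ring
    _ ≤ _ := List.sum_le_sum fun C _ => C.le_satProb ht

end

/-- Lemma 3.10, part 2: if `m₂ > 0` and `bias(Ψ) ≤ m₂`, then
`val_Ψ ≥ m₁/2 + 3m₂/4 + bias(Ψ)²/(4m₂)`. -/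
theorem or_bias_lower_bound_two {n : ℕ} (Ψ : List (OrClause n))
    (hm2 : 0 < numTwo Ψ) (hb : bias Ψ ≤ (numTwo Ψ : ℝ)) :
    (numOne Ψ : ℝ) / 2 + 3 * (numTwo Ψ : ℝ) / 4 + (bias Ψ) ^ 2 / (4 * (numTwo Ψ : ℝ))
      ≤ (maxVal Ψ : ℝ) := by
  have hm : (0 : ℝ) < numTwo Ψ := by exact_mod_cast hm2
  set ε := bias Ψ / (2 * numTwo Ψ) with hε_def
  have hε0 : 0 ≤ ε := by
    rw [hε_def, bias_eq_sum_abs_imbalance]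
    positivity
  have hε : ε ≤ 1 / 2 := by rw [hε_def, div_le_iff₀ (by positivity)]; linarith
  set t : Fin n → ℝ := fun v => ε * SignType.sign (imbalance Ψ v)
  have ht : ∀ v, |t v| ≤ ε := by
    intro v
    rw [abs_mul, abs_of_nonneg hε0]
    cases SignType.sign (imbalance Ψ v) <;> simp [hε0]
  have h_sum : ∑ v, t v * imbalance Ψ v = 2 * ε * bias Ψ := by
    simp_rw [t, mul_assoc, sign_mul_self, ← Finset.mul_sum, bias_eq_sum_abs_imbalance]
    ring
  calc _ = numOne Ψ / 2 + (3 / 4 - ε ^ 2) * numTwo Ψ + 1 / 2 * ∑ v, t v * imbalance Ψ v := by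
        rw [h_sum, hε_def]
        field_simp
        ring
    _ ≤ (Ψ.map (·.satProb t)).sum := le_sum_satProb ht Ψ
    _ ≤ maxVal Ψ := sum_satProb_le_maxVal (fun v => (ht v).trans hε) Ψ
end
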